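/- For every a ∈ IS_n, rank(a) equals the minimum of rank(f) over all idempotents f of (IS_n, *) such that a belongs to the principal two-sided ideal IS_n * f * IS_n, provided rank(a) ≤ k (i.e. a is decomposable). -/

import Mathlib

open Equiv

/-- `IS n` : the symmetric inverse semigroup on `{1,…,n}`, modeled as partial
equivalences of `Fin n`.  Composition is left-to-right: `(x.trans y) t = y (x t)`. -/
abbrev IS (n : ℕ) := PEquiv (Fin n) (Fin n)

/-- The domain of a partial injective transformation. -/
def sdom {n : ℕ} (x : IS n) : Set (Fin n) := {a | (x a).isSome}

/-- The image of a partial injective transformation. -/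
def sim {n : ℕ} (x : IS n) : Set (Fin n) := {b | (x.symm b).isSome}

/-- The rank of a partial injective transformation: the cardinality of its image. -/
noncomputable def srank {n : ℕ} (x : IS n) : ℕ := Nat.card (sim x)

/-- The set `A = {1,…,k}` inside `Fin n`, i.e. the first `k` elements. -/
def SetA (n k : ℕ) : Set (Fin n) := {i | (i : ℕ) < k}

/-- The idempotent `e` acting identically on `A`, with `dom e = im e = A`. -/
def sandE (n k : ℕ) : IS n where
  toFun i := if (i : ℕ) < k then some i else none
  invFun i := if (i : ℕ) < k then some i else none
  inv a b := by
    split_ifs with h1 h2 <;>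
      simp_all [Option.mem_def, eq_comm] <;> rintro rfl <;> omega

/-- The sandwich multiplication `x * y = x e y` (left-to-right composition). -/
def smul (n k : ℕ) (x y : IS n) : IS n := (x.trans (sandE n k)).trans y

/-! Composition never increases rank, so every element of `IS_n * f * IS_n` has rank at most
`rank f`. Conversely, when `rank a ≤ k` some permutation `π` of `N` carries `dom a` into `A`.
The partial identity `f` on `π(dom a)` is then an idempotent of `(IS_n, *)` of rank `rank a`,
because `e` acts as the identity on it, and `a = π * f * (π⁻¹ a)`. -/

namespace PEquiv

variable {α β : Type*}

theorem ofSet_trans_ofSet_of_subset {s t : Set α} [DecidablePred (· ∈ s)]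
    [DecidablePred (· ∈ t)] (h : s ⊆ t) : (ofSet s).trans (ofSet t) = ofSet s := by
  ext a b
  simp only [trans_eq_some, ofSet_eq_some_iff]
  grind

theorem ofSet_trans_ofSet_of_superset {s t : Set α} [DecidablePred (· ∈ s)]
    [DecidablePred (· ∈ t)] (h : s ⊆ t) : (ofSet t).trans (ofSet s) = ofSet s := by
  simpa [symm_trans_rev] using congrArg PEquiv.symm (ofSet_trans_ofSet_of_subset h)

theorem ofSet_trans_eq_self {s : Set α} [DecidablePred (· ∈ s)] (f : α ≃. β)
    (h : ∀ a, (f a).isSome → a ∈ s) : (ofSet s).trans f = f := by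
  ext a b
  simp only [trans_eq_some, ofSet_eq_some_iff]
  constructor
  · rintro ⟨a', ⟨rfl, -⟩, hb⟩
    exact hb
  · intro hb
    exact ⟨a, ⟨rfl, h a (by simp [hb])⟩, hb⟩

theorem _root_.Equiv.toPEquiv_trans_ofSet_image_trans_symm (π : α ≃ β) (s : Set α)
    [DecidablePred (· ∈ π '' s)] [DecidablePred (· ∈ s)] :
    (π.toPEquiv.trans (ofSet (π '' s))).trans π.symm.toPEquiv = ofSet s := by
  ext a b
  simp [trans_eq_some, ofSet_eq_some_iff, Equiv.toPEquiv_apply]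
  grind

end PEquiv

theorem Equiv.Perm.exists_mapsTo_of_card_le {α : Type*} [Finite α] {s t : Set α}
    (h : Nat.card s ≤ Nat.card t) : ∃ π : Equiv.Perm α, Set.MapsTo π s t := by
  classical
  have := Fintype.ofFinite α
  rw [Nat.card_eq_fintype_card, Nat.card_eq_fintype_card] at h
  obtain ⟨g⟩ := Function.Embedding.nonempty_of_card_le h
  obtain ⟨π, hπ⟩ := Equiv.Perm.exists_extending_pair ((↑) : s → α) (fun x => (g x : α))
    Subtype.val_injective (Subtype.val_injective.comp g.injective)
  exact ⟨π, fun a ha => hπ ⟨a, ha⟩ ▸ (g ⟨a, ha⟩).2⟩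

section SymmetricInverse

variable {n : ℕ}

instance (n k : ℕ) : DecidablePred (· ∈ SetA n k) :=
  fun i => inferInstanceAs (Decidable ((i : ℕ) < k))

theorem sandE_eq_ofSet (n k : ℕ) : sandE n k = PEquiv.ofSet (SetA n k) := by
  ext i j
  by_cases h : (i : ℕ) < k <;> simp [sandE, SetA, PEquiv.ofSet, h]

theorem card_setA (n k : ℕ) : Nat.card (SetA n k) = min n k := by
  simp [SetA, Nat.card_eq_fintype_card, Fintype.card_subtype, Fin.card_filter_val_lt]

theorem srank_ofSet (s : Set (Fin n)) [DecidablePred (· ∈ s)] :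
    srank (PEquiv.ofSet s) = Nat.card s := by
  have hsim : sim (PEquiv.ofSet s) = s := by
    ext i
    simp [sim, Option.isSome_iff_exists]
  rw [srank, hsim]

theorem srank_le (x : IS n) : srank x ≤ n :=
  (Finite.card_subtype_le (· ∈ sim x)).trans_eq (Nat.card_fin n)

theorem card_sdom (x : IS n) : Nat.card (sdom x) = srank x := by
  have hinj : Function.Injective fun i : sdom x => (x i).get i.2 := by
    intro i j h
    simp only at h
    refine Subtype.ext (x.inj (Option.eq_some_of_isSome i.2) ?_)
    rw [h]
    exact Option.eq_some_of_isSome j.2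
  rw [srank, ← Nat.card_range_of_injective hinj]
  congr
  ext b
  constructor
  · rintro ⟨⟨a, ha⟩, rfl⟩
    exact x.isSome_symm_get ha
  · intro hb
    obtain ⟨a, ha⟩ := Option.isSome_iff_exists.1 hb
    have hab : x a = some b := x.eq_some_iff.1 ha
    exact ⟨⟨a, by simp [sdom, hab]⟩, by simp [hab]⟩

theorem srank_symm (x : IS n) : srank x.symm = srank x :=
  card_sdom x

theorem srank_trans_le_right (p q : IS n) : srank (p.trans q) ≤ srank q := by
  apply Nat.card_mono (Set.toFinite _)
  intro b hb
  exact Option.isSome_of_isSome_bind hb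

theorem srank_trans_le_left (p q : IS n) : srank (p.trans q) ≤ srank p := by
  rw [← srank_symm, PEquiv.symm_trans_rev, ← srank_symm p]
  exact srank_trans_le_right _ _

theorem srank_smul_le_left {k : ℕ} (x y : IS n) : srank (smul n k x y) ≤ srank x :=
  (srank_trans_le_left _ _).trans (srank_trans_le_left _ _)

theorem srank_smul_le_right {k : ℕ} (x y : IS n) : srank (smul n k x y) ≤ srank y :=
  srank_trans_le_right _ _

theorem smul_ofSet_self {k : ℕ} {t : Set (Fin n)} [DecidablePred (· ∈ t)]
    (ht : t ⊆ SetA n k) : smul n k (PEquiv.ofSet t) (PEquiv.ofSet t) = PEquiv.ofSet t := by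
  rw [smul, sandE_eq_ofSet, PEquiv.ofSet_trans_ofSet_of_subset ht,
    PEquiv.ofSet_trans_ofSet_of_subset subset_rfl]

theorem smul_smul_ofSet {k : ℕ} {t : Set (Fin n)} [DecidablePred (· ∈ t)]
    (ht : t ⊆ SetA n k) (x y : IS n) :
    smul n k (smul n k x (PEquiv.ofSet t)) y = x.trans ((PEquiv.ofSet t).trans y) := by
  rw [smul, smul, sandE_eq_ofSet, PEquiv.trans_assoc x, PEquiv.ofSet_trans_ofSet_of_superset ht,
    PEquiv.trans_assoc x, PEquiv.ofSet_trans_ofSet_of_subset ht, PEquiv.trans_assoc]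

theorem exists_idempotent_srank_eq_of_srank_le {k : ℕ} (a : IS n) (ha : srank a ≤ k) :
    ∃ f : IS n, smul n k f f = f ∧ srank f = srank a ∧
      ∃ x y : IS n, smul n k (smul n k x f) y = a := by
  classical
  have hcard : Nat.card (sdom a) ≤ Nat.card (SetA n k) := by
    rw [card_sdom, card_setA]
    exact le_min (srank_le a) ha
  obtain ⟨π, hπ⟩ := Equiv.Perm.exists_mapsTo_of_card_le hcard
  refine ⟨PEquiv.ofSet (π '' sdom a), smul_ofSet_self hπ.image_subset, ?_,
    π.toPEquiv, π.symm.toPEquiv.trans a, ?_⟩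
  · rw [srank_ofSet, Nat.card_image_of_injective π.injective, card_sdom]
  · rw [smul_smul_ofSet hπ.image_subset, ← PEquiv.trans_assoc, ← PEquiv.trans_assoc,
      π.toPEquiv_trans_ofSet_image_trans_symm]
    exact PEquiv.ofSet_trans_eq_self a fun _ h => h

end SymmetricInverse

theorem rank_eq_min_idempotent_rank_general (n k : ℕ)
    (a : IS n) (ha : srank a ≤ k) :
    IsLeast {r : ℕ | ∃ f : IS n, smul n k f f = f ∧ srank f = r ∧
      ∃ x y : IS n, smul n k (smul n k x f) y = a} (srank a) := by
  refine ⟨exists_idempotent_srank_eq_of_srank_le a ha, ?_⟩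
  rintro _ ⟨f, -, rfl, x, y, rfl⟩
  exact (srank_smul_le_left _ _).trans (srank_smul_le_right _ _)

/-- for decomposable `a` (i.e. `rank a ≤ k`), `rank a` is the
minimum of `rank f` over idempotents `f` of `(IS_n, *)` with
`a ∈ IS_n * f * IS_n`. -/
theorem rank_eq_min_idempotent_rank (n k : ℕ) (hk : 1 ≤ k) (hkn : k ≤ n)
    (a : IS n) (ha : srank a ≤ k) :
    IsLeast {r : ℕ | ∃ f : IS n, smul n k f f = f ∧ srank f = r ∧
      ∃ x y : IS n, smul n k (smul n k x f) y = a} (srank a) :=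
  rank_eq_min_idempotent_rank_general n k a ha
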